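/- arXiv:math-ph/0311041 — 5 statements merged into one kernel-verified Lean document; each statement's English description precedes it below -/
import Mathlib

section
/- Let N ≥ 1 and let m, n be arbitrary nonnegative integers. The polynomial q¹ = (z^N + w^N)^{2n+1} is a quasi-invariant of the dihedral system I₂(2N) with multiplicities (m,n): for every j = 0,…,2N−1 the polynomial (z − ε^j·w)^{2mⱼ+1} divides σⱼ(q¹) − q¹ in R. -/
open MvPolynomial Finset

noncomputable section

/-- The polynomial ring `R = ℂ[z,w]`. -/
abbrev R2 : Type := MvPolynomial (Fin 2) ℂ

/-- `z`, the first variable. -/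
def zP : R2 := X 0

/-- `w`, the second variable (playing the role of `z̄`). -/
def wP : R2 := X 1

/-- `ε = exp(πi/N)`, a primitive `2N`-th root of unity. -/
def eps (N : ℕ) : ℂ := Complex.exp ((Real.pi : ℂ) * Complex.I / (N : ℂ))

/-- The reflection `σⱼ : z ↦ ε^j w, w ↦ ε^{-j} z` as a `ℂ`-algebra endomorphism. -/
def dihRefl (N j : ℕ) : R2 →ₐ[ℂ] R2 :=
  aeval (fun k : Fin 2 => if k = 0 then C (eps N ^ j) * X 1 else C (eps N ^ (-(j : ℤ))) * X 0)

/-- The multiplicity `mⱼ`: `m` for even `j`, `n` for odd `j`. -/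
def mult (m n j : ℕ) : ℕ := if Even j then m else n

/-- Quasi-invariance for the dihedral system `I₂(2N)` with multiplicities `(m,n)`. -/
def IsQuasiInv (N m n : ℕ) (p : R2) : Prop :=
  ∀ j < 2 * N, (zP - C (eps N ^ j) * wP) ^ (2 * mult m n j + 1) ∣ dihRefl N j p - p

theorem quasiInvariant_q1 (N m n : ℕ) (hN : 1 ≤ N) :
    IsQuasiInv N m n ((zP ^ N + wP ^ N) ^ (2 * n + 1)) := by
  intro j hj
  have hNz : (N : ℂ) ≠ 0 := Nat.cast_ne_zero.mpr (by omega)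
  have hepsN : eps N ^ N = -1 := by
    rw [eps, ← Complex.exp_nat_mul, mul_div_assoc']
    rw [mul_comm (N : ℂ), mul_div_assoc, div_self hNz, mul_one]
    exact Complex.exp_pi_mul_I
  have heps0 : eps N ≠ 0 := Complex.exp_ne_zero _
  have h1 : (eps N ^ j) ^ N = (-1 : ℂ) ^ j := by
    rw [← pow_mul, mul_comm, pow_mul, hepsN]
  have h2 : (eps N ^ (-(j : ℤ))) ^ N = (-1 : ℂ) ^ j := by
    rw [zpow_neg, zpow_natCast, inv_pow, h1]
    rcases Nat.even_or_odd j with he | ho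
    · simp [he.neg_one_pow]
    · simp [ho.neg_one_pow, inv_neg]
  have hcalc : dihRefl N j ((zP ^ N + wP ^ N) ^ (2 * n + 1))
      = (C ((-1 : ℂ) ^ j) * (zP ^ N + wP ^ N)) ^ (2 * n + 1) := by
    have e0 : dihRefl N j zP = C (eps N ^ j) * wP := by
      rw [dihRefl, zP, wP, aeval_X]
      exact if_pos rfl
    have e1 : dihRefl N j wP = C (eps N ^ (-(j : ℤ))) * zP := by
      rw [dihRefl, wP, zP, aeval_X]
      exact if_neg (by decide)
    rw [map_pow, map_add, map_pow, map_pow, e0, e1, mul_pow, mul_pow,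
      ← C_pow, ← C_pow, h1, h2, ← mul_add, add_comm (wP ^ N)]
  rcases Nat.even_or_odd j with he | ho
  · rw [hcalc]
    have : (-1 : ℂ) ^ j = 1 := he.neg_one_pow
    rw [this, map_one, one_mul, sub_self]
    exact dvd_zero _
  · rw [hcalc]
    have : (-1 : ℂ) ^ j = -1 := ho.neg_one_pow
    rw [this, map_neg, map_one, neg_one_mul, neg_pow,
      Odd.neg_one_pow (⟨n, rfl⟩ : Odd (2 * n + 1)), neg_one_mul]
    have hmul : mult m n j = n := by
      rw [mult, if_neg (Nat.not_even_iff_odd.mpr ho)]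
    rw [hmul]
    have hdvd : (zP - C (eps N ^ j) * wP) ∣ zP ^ N + wP ^ N := by
      have h := sub_dvd_pow_sub_pow zP (C (eps N ^ j) * wP) N
      have : (C (eps N ^ j) * wP) ^ N = -wP ^ N := by
        rw [mul_pow, ← C_pow, h1, this, map_neg, map_one]
        ring
      rwa [this, sub_neg_eq_add] at h
    have hdvd2 := pow_dvd_pow_of_dvd hdvd (2 * n + 1)
    have : -(zP ^ N + wP ^ N) ^ (2 * n + 1) - (zP ^ N + wP ^ N) ^ (2 * n + 1)
        = (-2 : R2) * (zP ^ N + wP ^ N) ^ (2 * n + 1) := by ring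
    rw [this]
    exact hdvd2.mul_left _
end
end

section
/- Let N ≥ 1 and let m, n be arbitrary nonnegative integers. The polynomial q² = (z^N − w^N)^{2m+1} is a quasi-invariant of the dihedral system I₂(2N) with multiplicities (m,n): for every j = 0,…,2N−1 the polynomial (z − ε^j·w)^{2mⱼ+1} divides σⱼ(q²) − q² in R. -/
open MvPolynomial Finset

noncomputable section

lemma epsN_pow (N : ℕ) (hN : 1 ≤ N) : eps N ^ N = -1 := by
  have hN0 : (N : ℂ) ≠ 0 := Nat.cast_ne_zero.mpr (by omega)
  rw [eps, ← Complex.exp_nat_mul]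
  rw [show (N : ℂ) * ((Real.pi : ℂ) * Complex.I / (N : ℂ)) = (Real.pi : ℂ) * Complex.I by
    field_simp]
  exact Complex.exp_pi_mul_I

lemma dihRefl_base (N j : ℕ) :
    dihRefl N j (zP ^ N - wP ^ N)
      = C ((eps N ^ j) ^ N) * wP ^ N - C ((eps N ^ (-(j : ℤ))) ^ N) * zP ^ N := by
  simp only [dihRefl, zP, wP, map_sub, map_pow, aeval_X]
  simp only [if_true, if_pos rfl, if_neg (by decide : (1 : Fin 2) ≠ 0), mul_pow, ← map_pow]

theorem quasiInvariant_q2 (N m n : ℕ) (hN : 1 ≤ N) :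
    IsQuasiInv N m n ((zP ^ N - wP ^ N) ^ (2 * m + 1)) := by
  intro j hj
  have hε : eps N ≠ 0 := Complex.exp_ne_zero _
  have hNpow : eps N ^ N = -1 := epsN_pow N hN
  have hneg : (eps N ^ (-(j : ℤ))) ^ N = ((-1 : ℂ) ^ j)⁻¹ := by
    rw [zpow_neg, zpow_natCast, inv_pow, ← pow_mul, mul_comm, pow_mul, hNpow]
  have hpos : (eps N ^ j) ^ N = (-1 : ℂ) ^ j := by
    rw [← pow_mul, mul_comm, pow_mul, hNpow]
  rcases Nat.even_or_odd j with hje | hjo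
  · -- even case
    have h1 : ((-1 : ℂ) ^ j) = 1 := hje.neg_one_pow
    have hbase : dihRefl N j (zP ^ N - wP ^ N) = -(zP ^ N - wP ^ N) := by
      rw [dihRefl_base, hneg, hpos, h1]
      simp only [inv_one, map_one, one_mul]
      ring
    have hmap : dihRefl N j ((zP ^ N - wP ^ N) ^ (2 * m + 1))
        = -((zP ^ N - wP ^ N) ^ (2 * m + 1)) := by
      rw [map_pow, hbase, Odd.neg_pow ⟨m, by ring⟩]
    rw [hmap, mult, if_pos hje]
    have hdvd : (zP - C (eps N ^ j) * wP) ∣ zP ^ N - wP ^ N := by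
      have : (C (eps N ^ j) * wP) ^ N = wP ^ N := by
        rw [mul_pow, ← map_pow, hpos, h1, map_one, one_mul]
      rw [← this]
      exact sub_dvd_pow_sub_pow _ _ _
    have := pow_dvd_pow_of_dvd hdvd (2 * m + 1)
    have h2 : -((zP ^ N - wP ^ N) ^ (2 * m + 1)) - (zP ^ N - wP ^ N) ^ (2 * m + 1)
        = (-2 : R2) * (zP ^ N - wP ^ N) ^ (2 * m + 1) := by ring
    rw [h2]
    exact this.mul_left _
  · -- odd case
    have h1 : ((-1 : ℂ) ^ j) = -1 := hjo.neg_one_pow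
    have hbase : dihRefl N j (zP ^ N - wP ^ N) = zP ^ N - wP ^ N := by
      rw [dihRefl_base, hneg, hpos, h1]
      simp only [map_neg, map_one, inv_neg, inv_one]
      ring
    rw [map_pow (dihRefl N j), hbase, sub_self]
    exact dvd_zero _
end
end

section
/- Assume n ≤ m and let i be an integer with 1 ≤ i ≤ 2N−1 and i ≠ N; set D = (m+n)N + i. Let a₀,…,a_{D−1} ∈ ℂ and p = ∑_{s=0}^{D−1} aₛ·z^{D−s}·w^{s}. Then p is quasi-invariant if and only if the following two families of linear equations hold: (i) for every t with 1 ≤ t ≤ n and every r with 0 ≤ r ≤ 2N−1, ∑_{0 ≤ s ≤ D−1, s ≡ r (mod 2N)} aₛ·(D−2s)^{2t−1} = 0; (ii) for every t with n < t ≤ m and every r with 0 ≤ r ≤ N−1, ∑_{0 ≤ s ≤ D−1, s ≡ r (mod N)} aₛ·(D−2s)^{2t−1} = 0. -/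
open MvPolynomial Finset

noncomputable section

/-!
View `ℂ[z,w]` as `ℂ[w][z]`. For `μ ≠ 0`, a polynomial is divisible by `(z - μw)^M` iff
`(z ∂_z)^t f` vanishes at `z = μw` for all `t < M` (the Euler operator `z ∂_z` lowers the order of
vanishing at `μw` by exactly one). For `f = σⱼ p - p` with `μ = εʲ` these values are
`μ^D w^D ∑ₛ aₛ μ⁻ˢ (sᵗ - (D - s)ᵗ)`. Expanding `sᵗ - (D - s)ᵗ` in powers of `D - 2s` only odd
powers survive, with nonzero leading coefficient, so the conditions for `t ≤ 2mⱼ` amount to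
`∑ₛ aₛ (D - 2s)^(2t-1) μ⁻ˢ = 0` for `1 ≤ t ≤ mⱼ`. As `j` varies these are the discrete Fourier
coefficients of the residue-class sums of `aₛ (D - 2s)^(2t-1)`: modulo `2N` when all `2N`
reflections are involved (`t ≤ n`), modulo `N` when only the even `j` are (`n < t ≤ m`). A
Vandermonde determinant shows that they all vanish iff the residue-class sums do.
-/

namespace Polynomial

variable {A : Type*} [CommRing A]

def eulerOp : A[X] →ₗ[A] A[X] := LinearMap.mulLeft A X ∘ₗ derivative

lemma eulerOp_apply (f : A[X]) : eulerOp f = X * derivative f := rfl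

lemma eulerOp_pow_monomial (t k : ℕ) (a : A) :
    (eulerOp ^ t) (monomial k a) = monomial k ((k : A) ^ t * a) := by
  induction t with
  | zero => simp
  | succ t ih =>
    rw [pow_succ', Module.End.mul_apply, ih, eulerOp_apply, derivative_monomial, X_mul_monomial]
    rcases k with _ | k
    · simp
    · simp only [Nat.cast_add, Nat.cast_one, Nat.add_sub_cancel, pow_succ]
      ring_nf

lemma eulerOp_X_sub_C_pow_succ_mul (r : A) (k : ℕ) (h : A[X]) :
    ∃ u : A[X], eulerOp ((X - C r) ^ (k + 1) * h) = (X - C r) ^ k * u ∧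
      u.eval r = (k + 1) * r * h.eval r := by
  refine ⟨X * ((k + 1 : A[X]) * h + (X - C r) * derivative h), ?_, by simp; ring⟩
  rw [eulerOp_apply, derivative_mul, derivative_pow, derivative_sub, derivative_X, derivative_C]
  simp only [Nat.add_sub_cancel, Nat.cast_add, Nat.cast_one, map_add, map_natCast, map_one]
  ring

lemma eulerOp_pow_X_sub_C_pow_mul (r : A) (j k : ℕ) (h : A[X]) :
    ∃ u : A[X], (eulerOp ^ j) ((X - C r) ^ (k + j) * h) = (X - C r) ^ k * u ∧
      u.eval r = (k + j).descFactorial j * r ^ j * h.eval r := by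
  induction j generalizing h with
  | zero => exact ⟨h, by simp⟩
  | succ j ih =>
    obtain ⟨v, hv, hv_eval⟩ := eulerOp_X_sub_C_pow_succ_mul r (k + j) h
    obtain ⟨u, hu, hu_eval⟩ := ih v
    refine ⟨u, ?_, ?_⟩
    · rw [pow_succ, Module.End.mul_apply, ← add_assoc, hv, hu]
    · rw [hu_eval, hv_eval, ← add_assoc, Nat.succ_descFactorial_succ]
      push_cast
      ring

theorem X_sub_C_pow_dvd_iff_eval_eulerOp_pow [IsDomain A] [CharZero A] {r : A} (hr : r ≠ 0)
    {f : A[X]} {M : ℕ} : (X - C r) ^ M ∣ f ↔ ∀ t < M, ((eulerOp ^ t) f).eval r = 0 := by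
  induction M with
  | zero => simp
  | succ M ih =>
    constructor
    · rintro ⟨g, rfl⟩ t ht
      obtain ⟨u, hu, -⟩ := eulerOp_pow_X_sub_C_pow_mul r t (M + 1 - t) g
      rw [Nat.sub_add_cancel ht.le] at hu
      rw [hu, eval_mul, eval_pow, eval_sub, eval_X, eval_C, sub_self, zero_pow (by omega), zero_mul]
    · intro H
      obtain ⟨g, rfl⟩ := ih.mpr fun t ht => H t (by omega)
      obtain ⟨u, hu, hu_eval⟩ := eulerOp_pow_X_sub_C_pow_mul r M 0 g
      rw [zero_add, pow_zero, one_mul] at hu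
      have hg : g.eval r = 0 := by
        have hM := H M M.lt_succ_self
        rw [hu, hu_eval, zero_add, Nat.descFactorial_self] at hM
        simpa [Nat.factorial_ne_zero, hr] using hM
      rw [pow_succ]
      exact mul_dvd_mul_left _ (dvd_iff_isRoot.mpr hg)

end Polynomial

/-- `(z ∂_z)^t f` at `z = μw`, as a polynomial in `w`: `finSuccEquiv` turns `z` into `X` and `w`
into `C (X 0)`. -/
def eulerMoment (μ : ℂ) (t : ℕ) : R2 →+ MvPolynomial (Fin 1) ℂ :=
  (Polynomial.evalRingHom (C μ * X 0)).toAddMonoidHom.comp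
    ((Polynomial.eulerOp ^ t).toAddMonoidHom.comp (finSuccEquiv ℂ 1 : R2 →+ _))

lemma finSuccEquiv_zP : finSuccEquiv ℂ 1 zP = Polynomial.X := finSuccEquiv_X_zero

lemma finSuccEquiv_wP : finSuccEquiv ℂ 1 wP = Polynomial.C (X 0) :=
  finSuccEquiv_X_succ (j := 0)

lemma finSuccEquiv_C_complex (a : ℂ) : finSuccEquiv ℂ 1 (C a) = Polynomial.C (C a) :=
  (finSuccEquiv ℂ 1).commutes a

lemma eulerMoment_monomial (μ a : ℂ) (t k l : ℕ) :
    eulerMoment μ t (C a * zP ^ k * wP ^ l) = C (a * k ^ t * μ ^ k) * X 0 ^ (k + l) := by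
  have h : finSuccEquiv ℂ 1 (C a * zP ^ k * wP ^ l) = Polynomial.monomial k (C a * X 0 ^ l) := by
    rw [map_mul, map_mul, map_pow, map_pow, finSuccEquiv_zP, finSuccEquiv_wP,
      finSuccEquiv_C_complex, ← Polynomial.C_pow, mul_right_comm, ← Polynomial.C_mul,
      Polynomial.C_mul_X_pow_eq_monomial]
  simp only [eulerMoment, AddMonoidHom.comp_apply, AddMonoidHom.coe_coe, h,
    LinearMap.toAddMonoidHom_coe, Polynomial.eulerOp_pow_monomial, RingHom.toAddMonoidHom_eq_coe,
    Polynomial.coe_evalRingHom, Polynomial.eval_monomial]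
  simp only [map_mul, map_pow, map_natCast]
  ring

theorem pow_dvd_iff_eulerMoment {μ : ℂ} (hμ : μ ≠ 0) (f : R2) (M : ℕ) :
    (zP - C μ * wP) ^ M ∣ f ↔ ∀ t < M, eulerMoment μ t f = 0 := by
  have h : finSuccEquiv ℂ 1 ((zP - C μ * wP) ^ M) =
      (Polynomial.X - Polynomial.C (C μ * X 0)) ^ M := by
    rw [map_pow, map_sub, map_mul, finSuccEquiv_zP, finSuccEquiv_wP, finSuccEquiv_C_complex,
      Polynomial.C_mul]
  rw [← map_dvd_iff (finSuccEquiv ℂ 1), h,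
    Polynomial.X_sub_C_pow_dvd_iff_eval_eulerOp_pow (mul_ne_zero (C_ne_zero.mpr hμ) (X_ne_zero 0))]
  rfl

section Reflection

variable {σ : R2 →ₐ[ℂ] R2} {μ : ℂ}

lemma reflection_monomial (hz : σ zP = C μ * wP) (hw : σ wP = C μ⁻¹ * zP) (a : ℂ) (k l : ℕ) :
    σ (C a * zP ^ k * wP ^ l) = C (a * μ ^ k * μ⁻¹ ^ l) * zP ^ l * wP ^ k := by
  have ha : σ (C a) = C a := σ.commutes a
  rw [map_mul, map_mul, map_pow, map_pow, hz, hw, ha, mul_pow, mul_pow, map_mul, map_mul, map_pow,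
    map_pow]
  ring

lemma eulerMoment_reflection_sub (hμ : μ ≠ 0) (hz : σ zP = C μ * wP) (hw : σ wP = C μ⁻¹ * zP)
    (a : ℕ → ℂ) (D t : ℕ) :
    eulerMoment μ t (σ (∑ s ∈ range D, C (a s) * zP ^ (D - s) * wP ^ s) -
        ∑ s ∈ range D, C (a s) * zP ^ (D - s) * wP ^ s) =
      C (μ ^ D * ∑ s ∈ range D, a s * μ⁻¹ ^ s * ((s : ℂ) ^ t - ((D : ℂ) - s) ^ t)) * X 0 ^ D := by
  rw [map_sum, ← sum_sub_distrib, map_sum, mul_sum, map_sum, sum_mul]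
  refine sum_congr rfl fun s hs => ?_
  obtain ⟨e, rfl⟩ := Nat.exists_eq_add_of_lt (mem_range.mp hs)
  rw [map_sub, reflection_monomial hz hw, eulerMoment_monomial, eulerMoment_monomial,
    show s + e + 1 - s = e + 1 by omega, show s + (e + 1) = s + e + 1 by omega,
    show e + 1 + s = s + e + 1 by omega, ← sub_mul, ← map_sub]
  congr 2
  push_cast
  rw [inv_pow]
  field_simp
  ring

end Reflection

lemma forall_le_eq_zero_iff_of_triangular {K : Type*} [Semiring K] [NoZeroDivisors K]
    {m o : ℕ → K} (c : ℕ → ℕ → K) (hm : ∀ t, m t = ∑ l ∈ range (t + 1), c t l * o l)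
    (hc : ∀ t, c t t ≠ 0) (T : ℕ) : (∀ t ≤ T, m t = 0) ↔ ∀ l ≤ T, o l = 0 := by
  refine ⟨fun h l => ?_, fun h t ht => ?_⟩
  · induction l using Nat.strong_induction_on with
    | _ l ih =>
      intro hl
      have hml := h l hl
      have hlower : ∑ l' ∈ range l, c l l' * o l' = 0 := sum_eq_zero fun l' hl' => by
        rw [ih l' (mem_range.mp hl') (by have := mem_range.mp hl'; omega), mul_zero]
      rw [hm, sum_range_succ, hlower, zero_add] at hml
      exact (mul_eq_zero.mp hml).resolve_left (hc l)
  · rw [hm]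
    exact sum_eq_zero fun l hl => by rw [h l (by have := mem_range.mp hl; omega), mul_zero]

section OddMoments

variable {K ι : Type*} [Field K]

lemma two_pow_mul_pow_sub_pow (d x : K) (t : ℕ) :
    2 ^ t * (x ^ t - (d - x) ^ t) =
      ∑ l ∈ range (t + 1), ((-1) ^ l - 1) * t.choose l * d ^ (t - l) * (d - 2 * x) ^ l := by
  have hx : (2 : K) ^ t * x ^ t = (-(d - 2 * x) + d) ^ t := by rw [← mul_pow]; ring_nf
  have hdx : (2 : K) ^ t * (d - x) ^ t = ((d - 2 * x) + d) ^ t := by rw [← mul_pow]; ring_nf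
  rw [mul_sub, hx, hdx, add_pow, add_pow, ← sum_sub_distrib]
  refine sum_congr rfl fun l _ => ?_
  rw [neg_pow]
  ring

theorem sum_pow_sub_pow_eq_zero_iff_odd [NeZero (2 : K)] (S : Finset ι) (b x : ι → K) (d : K)
    (M : ℕ) :
    (∀ t < 2 * M + 1, ∑ s ∈ S, b s * (x s ^ t - (d - x s) ^ t) = 0) ↔
      ∀ t, 1 ≤ t → t ≤ M → ∑ s ∈ S, b s * (d - 2 * x s) ^ (2 * t - 1) = 0 := by
  set o : ℕ → K := fun l => ∑ s ∈ S, b s * (d - 2 * x s) ^ l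
  have hm : ∀ t, ∑ s ∈ S, b s * (x s ^ t - (d - x s) ^ t) =
      ∑ l ∈ range (t + 1), (2 ^ t)⁻¹ * t.choose l * d ^ (t - l) * (((-1) ^ l - 1) * o l) := by
    intro t
    have h2t : (2 : K) ^ t ≠ 0 := pow_ne_zero _ two_ne_zero
    simp only [o, mul_sum]
    rw [sum_comm]
    refine sum_congr rfl fun s _ => ?_
    rw [← mul_right_inj' h2t, mul_left_comm, two_pow_mul_pow_sub_pow, mul_sum, mul_sum]
    refine sum_congr rfl fun l _ => ?_
    field_simp
  simp only [Nat.lt_succ_iff]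
  rw [forall_le_eq_zero_iff_of_triangular _ hm (fun t => by simp [two_ne_zero])]
  constructor
  · intro h t ht1 ht2
    have hodd : Odd (2 * t - 1) := ⟨t - 1, by omega⟩
    have := h (2 * t - 1) (by omega)
    rw [hodd.neg_one_pow, mul_eq_zero] at this
    exact this.resolve_left (by rw [show (-1 - 1 : K) = -2 by ring, neg_eq_zero]; exact two_ne_zero)
  · intro h l hl
    rcases Nat.even_or_odd l with heven | ⟨k, rfl⟩
    · rw [heven.neg_one_pow, sub_self, zero_mul]
    · have := h (k + 1) (by omega) (by omega)
      rw [show 2 * (k + 1) - 1 = 2 * k + 1 by omega] at this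
      simp only [o, this, mul_zero]

end OddMoments

theorem IsPrimitiveRoot.forall_sum_mul_pow_eq_zero_iff {K : Type*} [CommRing K] [IsDomain K]
    {z : K} {k : ℕ} (hz : IsPrimitiveRoot z k) (S : Finset ℕ) (b : ℕ → K) :
    (∀ j < k, ∑ s ∈ S, b s * (z ^ j) ^ s = 0) ↔ ∀ r < k, ∑ s ∈ S with s % k = r, b s = 0 := by
  obtain rfl | hk := k.eq_zero_or_pos
  · simp
  set B : Fin k → K := fun r => ∑ s ∈ S with s % k = r, b s
  have hfiber : ∀ j, ∑ s ∈ S, b s * (z ^ j) ^ s = ∑ r, B r * (z ^ j) ^ (r : ℕ) := by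
    intro j
    rw [Fin.sum_univ_eq_sum_range (fun r => (∑ s ∈ S with s % k = r, b s) * (z ^ j) ^ r),
      ← sum_fiberwise_of_maps_to (g := (· % k)) fun s _ => mem_range.mpr (Nat.mod_lt s hk)]
    refine sum_congr rfl fun r _ => ?_
    rw [sum_mul]
    refine sum_congr rfl fun s hs => ?_
    rw [← (mem_filter.mp hs).2, ← pow_eq_pow_mod s (by rw [← pow_mul, mul_comm, pow_mul,
      hz.pow_eq_one, one_pow])]
  constructor
  · intro h r hr
    have hB : B = 0 := Matrix.eq_zero_of_forall_index_sum_mul_pow_eq_zero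
      (f := fun j : Fin k => z ^ (j : ℕ)) (fun i j hij => Fin.ext (hz.pow_inj i.2 j.2 hij))
      fun j => (hfiber j).symm.trans (h j j.2)
    exact congrFun hB ⟨r, hr⟩
  · intro h j _
    rw [hfiber]
    exact sum_eq_zero fun r _ => by rw [show B r = 0 from h r r.2, zero_mul]

lemma dihRefl_zP (N j : ℕ) : dihRefl N j zP = C (eps N ^ j) * wP := by
  simp [dihRefl, zP, wP]

lemma dihRefl_wP (N j : ℕ) : dihRefl N j wP = C (eps N ^ j)⁻¹ * zP := by
  simp [dihRefl, zP, wP, zpow_neg]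

lemma eps_ne_zero (N : ℕ) : eps N ≠ 0 := Complex.exp_ne_zero _

lemma eps_isPrimitiveRoot {N : ℕ} (hN : 0 < N) : IsPrimitiveRoot (eps N) (2 * N) := by
  rw [eps]
  convert Complex.isPrimitiveRoot_exp (2 * N) (by omega) using 2
  push_cast
  field_simp

theorem pow_dvd_reflection_sub_iff {σ : R2 →ₐ[ℂ] R2} {μ : ℂ} (hμ : μ ≠ 0)
    (hz : σ zP = C μ * wP) (hw : σ wP = C μ⁻¹ * zP) (a : ℕ → ℂ) (D M : ℕ) :
    (zP - C μ * wP) ^ (2 * M + 1) ∣ σ (∑ s ∈ range D, C (a s) * zP ^ (D - s) * wP ^ s) -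
        ∑ s ∈ range D, C (a s) * zP ^ (D - s) * wP ^ s ↔
      ∀ t, 1 ≤ t → t ≤ M → ∑ s ∈ range D, a s * ((D : ℂ) - 2 * s) ^ (2 * t - 1) * μ⁻¹ ^ s = 0 := by
  have hmoment : ∀ t, eulerMoment μ t (σ (∑ s ∈ range D, C (a s) * zP ^ (D - s) * wP ^ s) -
      ∑ s ∈ range D, C (a s) * zP ^ (D - s) * wP ^ s) = 0 ↔
        ∑ s ∈ range D, a s * μ⁻¹ ^ s * ((s : ℂ) ^ t - ((D : ℂ) - s) ^ t) = 0 := fun t => by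
    rw [eulerMoment_reflection_sub hμ hz hw, mul_eq_zero, C_eq_zero, mul_eq_zero,
      or_iff_right (pow_ne_zero _ hμ), or_iff_left (pow_ne_zero _ (X_ne_zero 0))]
  simp only [pow_dvd_iff_eulerMoment hμ, hmoment]
  rw [sum_pow_sub_pow_eq_zero_iff_odd]
  simp only [mul_right_comm _ (μ⁻¹ ^ _)]

lemma forall_le_mult_iff {N m n : ℕ} (hnm : n ≤ m) (P : ℕ → ℕ → Prop) :
    (∀ j < 2 * N, ∀ t, 1 ≤ t → t ≤ mult m n j → P j t) ↔
      (∀ t, 1 ≤ t → t ≤ n → ∀ j < 2 * N, P j t) ∧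
        ∀ t, n < t → t ≤ m → ∀ j < N, P (2 * j) t := by
  constructor
  · intro h
    refine ⟨fun t ht1 ht2 j hj => h j hj t ht1 ?_, fun t ht1 ht2 j hj => h (2 * j) (by omega) t
      (by omega) (by rwa [mult, if_pos (even_two_mul j)])⟩
    unfold mult
    split_ifs <;> omega
  · rintro ⟨h_all, h_even⟩ j hj t ht1 ht2
    unfold mult at ht2
    split_ifs at ht2 with hj_even
    · by_cases htn : t ≤ n
      · exact h_all t ht1 htn j hj
      · obtain ⟨j', rfl⟩ := hj_even
        rw [← two_mul]
        exact h_even t (by omega) ht2 j' (by omega)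
    · exact h_all t ht1 ht2 j hj

theorem quasiInvariance_conditions_general_general (N m n i : ℕ) (hN : 1 ≤ N) (hnm : n ≤ m) (a : ℕ → ℂ) :
    IsQuasiInv N m n
        (∑ s ∈ Finset.range ((m + n) * N + i), C (a s) * zP ^ ((m + n) * N + i - s) * wP ^ s) ↔
      (∀ t, 1 ≤ t → t ≤ n → ∀ r < 2 * N,
          ∑ s ∈ (Finset.range ((m + n) * N + i)).filter (fun s => s % (2 * N) = r),
            a s * ((((m + n) * N + i : ℕ) : ℂ) - 2 * s) ^ (2 * t - 1) = 0) ∧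
      (∀ t, n < t → t ≤ m → ∀ r < N,
          ∑ s ∈ (Finset.range ((m + n) * N + i)).filter (fun s => s % N = r),
            a s * ((((m + n) * N + i : ℕ) : ℂ) - 2 * s) ^ (2 * t - 1) = 0) := by
  set D := (m + n) * N + i
  have hζ : IsPrimitiveRoot (eps N)⁻¹ (2 * N) := (eps_isPrimitiveRoot hN).inv
  have hζ2 : IsPrimitiveRoot ((eps N)⁻¹ ^ 2) N := hζ.pow (by omega) rfl
  have hrefl : ∀ j, (zP - C (eps N ^ j) * wP) ^ (2 * mult m n j + 1) ∣
      dihRefl N j (∑ s ∈ range D, C (a s) * zP ^ (D - s) * wP ^ s) -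
        ∑ s ∈ range D, C (a s) * zP ^ (D - s) * wP ^ s ↔
      ∀ t, 1 ≤ t → t ≤ mult m n j →
        ∑ s ∈ range D, a s * ((D : ℂ) - 2 * s) ^ (2 * t - 1) * ((eps N)⁻¹ ^ j) ^ s = 0 :=
    fun j => by
      rw [pow_dvd_reflection_sub_iff (pow_ne_zero _ (eps_ne_zero N)) (dihRefl_zP N j)
        (dihRefl_wP N j), inv_pow]
  simp only [IsQuasiInv, hrefl]
  rw [forall_le_mult_iff hnm]
  refine and_congr (forall₃_congr fun t _ _ => hζ.forall_sum_mul_pow_eq_zero_iff _ _)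
    (forall₃_congr fun t _ _ => ?_)
  simp only [pow_mul]
  exact hζ2.forall_sum_mul_pow_eq_zero_iff _ _

theorem quasiInvariance_conditions_general (N m n i : ℕ) (hN : 1 ≤ N) (hnm : n ≤ m)
    (hi1 : 1 ≤ i) (hi2 : i ≤ 2 * N - 1) (hiN : i ≠ N) (a : ℕ → ℂ) :
    IsQuasiInv N m n
        (∑ s ∈ Finset.range ((m + n) * N + i), C (a s) * zP ^ ((m + n) * N + i - s) * wP ^ s) ↔
      (∀ t, 1 ≤ t → t ≤ n → ∀ r < 2 * N,
          ∑ s ∈ (Finset.range ((m + n) * N + i)).filter (fun s => s % (2 * N) = r),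
            a s * ((((m + n) * N + i : ℕ) : ℂ) - 2 * s) ^ (2 * t - 1) = 0) ∧
      (∀ t, n < t → t ≤ m → ∀ r < N,
          ∑ s ∈ (Finset.range ((m + n) * N + i)).filter (fun s => s % N = r),
            a s * ((((m + n) * N + i : ℕ) : ℂ) - 2 * s) ^ (2 * t - 1) = 0) :=
  quasiInvariance_conditions_general_general N m n i hN hnm a
end
end

section
/- Assume n ≤ m and let i be an integer with 1 ≤ i ≤ 2N−1 and i ≠ N. Let a₀,…,a_{m+n} ∈ ℂ and q = ∑_{s=0}^{m+n} aₛ·z^{(m+n−s)N+i}·w^{Ns}. Then q is quasi-invariant if and only if its coefficients satisfy: (i) ∑_{0 ≤ s ≤ m+n, s even} aₛ·((m+n−2s)N+i)^{2t−1} = 0 for all t with 1 ≤ t ≤ n; (ii) ∑_{0 ≤ s ≤ m+n, s odd} aₛ·((m+n−2s)N+i)^{2t−1} = 0 for all t with 1 ≤ t ≤ n; (iii) ∑_{s=0}^{m+n} aₛ·((m+n−2s)N+i)^{2t−1} = 0 for all t with n < t ≤ m. -/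
/-!
Substituting `z ↦ c (z + w)` sends `z - c w` to `c z` and `σ (z^A w^B) - z^A w^B`, for the
reflection `σ` in the mirror `z = c w`, to `c^A ((z + w)^B w^A - (z + w)^A w^B)`. So for
`q = ∑ aₛ z^{Aₛ} w^{Bₛ}` homogeneous of degree `D`, the polynomial `(z - c w)^k` divides
`σ q - q` iff `∑ aₛ c^{Aₛ} (C(Bₛ, r) - C(Aₛ, r)) = 0` for all `r < k`. On the mirrors of
`I₂(2N)` the factor `c^{Aₛ}` is a nonzero constant times `(±1)^s`, the sign given by the parity
of the mirror. As `Aₛ + Bₛ = D` is fixed, `C(B, r) - C(A, r)` is an odd polynomial of degree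
at most `r` in `A - B = (m + n - 2s) N + i`, of exact degree `r` when `r` is odd; by
triangularity the binomial conditions for `r ≤ 2M` are equivalent to the vanishing of the odd
power sums of exponent `< 2M`. Splitting the sums over even and odd `s` gives (i)–(iii).
-/

open MvPolynomial Finset

noncomputable section

section Reflection

variable {K : Type*} [Field K]

def reflection (c : K) : MvPolynomial (Fin 2) K →ₐ[K] MvPolynomial (Fin 2) K :=
  aeval ![C c * X 1, C c⁻¹ * X 0]

def shear (c : K) : MvPolynomial (Fin 2) K →ₐ[K] MvPolynomial (Fin 2) K :=
  aeval ![C c * (X 0 + X 1), X 1]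

def shearEquiv {c : K} (hc : c ≠ 0) : MvPolynomial (Fin 2) K ≃ₐ[K] MvPolynomial (Fin 2) K :=
  AlgEquiv.ofAlgHom (shear c) (aeval ![C c⁻¹ * X 0 - X 1, X 1])
    (algHom_ext fun i => by fin_cases i <;> simp [shear, ← mul_assoc, ← C_mul, hc])
    (algHom_ext fun i => by fin_cases i <;> simp [shear, ← mul_assoc, ← C_mul, hc])

theorem X_sub_C_mul_X_pow_dvd_iff {c : K} (hc : c ≠ 0) (k : ℕ) (f : MvPolynomial (Fin 2) K) :
    (X 0 - C c * X 1) ^ k ∣ f ↔ X 0 ^ k ∣ shear c f := by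
  have hunit : IsUnit (C (c ^ k) : MvPolynomial (Fin 2) K) := (Ne.isUnit (pow_ne_zero k hc)).map C
  rw [← map_dvd_iff (shearEquiv hc)]
  simp only [shearEquiv, AlgEquiv.ofAlgHom_apply, map_pow, map_sub, map_mul, shear, aeval_X,
    aeval_C, Matrix.cons_val_zero, Matrix.cons_val_one]
  rw [algebraMap_eq, mul_add, add_sub_cancel_right, mul_pow, ← C_pow, hunit.mul_left_dvd]

theorem add_pow_mul_pow_eq_sum (A B D : ℕ) (h : A + B = D) :
    ((X 0 + X 1) ^ A * X 1 ^ B : MvPolynomial (Fin 2) K) =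
      ∑ r ∈ range (D + 1), C (A.choose r : K) * X 0 ^ r * X 1 ^ (D - r) := by
  rw [add_pow, sum_mul, ← sum_subset (range_subset_range.2 (by omega : A + 1 ≤ D + 1))]
  · refine sum_congr rfl fun r hr => ?_
    rw [show D - r = A - r + B by simp at hr; omega, pow_add, map_natCast]
    ring
  · intro r _ hr
    rw [mem_range, not_lt] at hr
    rw [Nat.choose_eq_zero_of_lt (by omega), Nat.cast_zero, map_zero, zero_mul, zero_mul]

theorem X_pow_dvd_sum_iff (φ : ℕ → K) (D k : ℕ) (hφ : ∀ r, D < r → φ r = 0) :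
    ((X 0 : MvPolynomial (Fin 2) K) ^ k ∣ ∑ r ∈ range (D + 1), C (φ r) * X 0 ^ r * X 1 ^ (D - r)) ↔
      ∀ r < k, φ r = 0 := by
  constructor
  · intro h r hr
    have h' := map_dvd (aeval (R := K) (S₁ := Polynomial K) ![Polynomial.X, 1]) h
    simp only [map_pow, map_sum, map_mul, aeval_X, aeval_C, Matrix.cons_val_zero,
      Matrix.cons_val_one, one_pow, mul_one, Polynomial.X_pow_dvd_iff, Polynomial.finsetSum_coeff,
      Polynomial.algebraMap_eq, Polynomial.coeff_C_mul_X_pow] at h'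
    rcases le_or_gt r D with hrD | hrD
    · simpa [hrD, Nat.lt_succ_iff] using h' r hr
    · exact hφ r hrD
  · intro h
    refine dvd_sum fun r _ => ?_
    rcases lt_or_ge r k with hrk | hrk
    · simp [h r hrk]
    · exact (pow_dvd_pow _ hrk).trans (Dvd.intro (C (φ r) * X 1 ^ (D - r)) (by ring))

theorem shear_reflection_sub_monomial {c : K} (hc : c ≠ 0) (A B D : ℕ) (h : A + B = D) :
    shear c (reflection c (X 0 ^ A * X 1 ^ B) - X 0 ^ A * X 1 ^ B) =
      ∑ r ∈ range (D + 1),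
        C (c ^ A * ((B.choose r : K) - A.choose r)) * X 0 ^ r * X 1 ^ (D - r) := by
  have hrefl : shear c (reflection c (X 0 ^ A * X 1 ^ B)) =
      C (c ^ A) * ((X 0 + X 1) ^ B * X 1 ^ A) := by
    simp only [shear, reflection, map_mul, map_pow, aeval_X, aeval_C, Matrix.cons_val_zero,
      Matrix.cons_val_one, algebraMap_eq]
    rw [← mul_assoc, ← C_mul, inv_mul_cancel₀ hc, C_1, one_mul, mul_pow, ← C_pow]
    ring
  have hid : shear c (X 0 ^ A * X 1 ^ B) = C (c ^ A) * ((X 0 + X 1) ^ A * X 1 ^ B) := by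
    simp only [shear, map_mul, map_pow, aeval_X, Matrix.cons_val_zero, Matrix.cons_val_one]
    rw [mul_pow, ← C_pow]
    ring
  rw [map_sub, hrefl, hid, add_pow_mul_pow_eq_sum B A D (by omega), add_pow_mul_pow_eq_sum A B D h,
    mul_sum, mul_sum, ← sum_sub_distrib]
  refine sum_congr rfl fun r _ => ?_
  simp only [C_mul, C_sub]
  ring

theorem X_sub_C_mul_X_pow_dvd_reflection_sub_iff {ι : Type*} {c : K} (hc : c ≠ 0)
    (S : Finset ι) (a : ι → K) (A B : ι → ℕ) (D : ℕ) (hAB : ∀ s ∈ S, A s + B s = D) (k : ℕ) :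
    (X 0 - C c * X 1) ^ k ∣
        reflection c (∑ s ∈ S, C (a s) * X 0 ^ A s * X 1 ^ B s) -
          ∑ s ∈ S, C (a s) * X 0 ^ A s * X 1 ^ B s ↔
      ∀ r < k, ∑ s ∈ S, a s * c ^ A s * ((B s).choose r - (A s).choose r : K) = 0 := by
  have hshear : shear c (reflection c (∑ s ∈ S, C (a s) * X 0 ^ A s * X 1 ^ B s) -
      ∑ s ∈ S, C (a s) * X 0 ^ A s * X 1 ^ B s) =
      ∑ r ∈ range (D + 1), C (∑ s ∈ S, a s * c ^ A s * ((B s).choose r - (A s).choose r : K)) *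
        X 0 ^ r * X 1 ^ (D - r) := by
    calc _ = ∑ s ∈ S, C (a s) *
          shear c (reflection c (X 0 ^ A s * X 1 ^ B s) - X 0 ^ A s * X 1 ^ B s) := by
          simp only [map_sub, map_sum, map_mul, algHom_C, algebraMap_eq, mul_assoc, mul_sub,
            sum_sub_distrib]
      _ = _ := by
          rw [sum_congr rfl fun s hs => by rw [shear_reflection_sub_monomial hc _ _ _ (hAB s hs)]]
          simp only [mul_sum]
          rw [sum_comm]
          refine sum_congr rfl fun r _ => ?_
          simp only [map_sum, sum_mul, C_mul, mul_assoc]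
  rw [X_sub_C_mul_X_pow_dvd_iff hc, hshear, X_pow_dvd_sum_iff]
  intro r hr
  refine sum_eq_zero fun s hs => ?_
  rw [Nat.choose_eq_zero_of_lt (by have := hAB s hs; omega),
    Nat.choose_eq_zero_of_lt (by have := hAB s hs; omega), sub_self, mul_zero]

end Reflection

theorem dihRefl_eq_reflection (N j : ℕ) : dihRefl N j = reflection (eps N ^ j) := by
  refine congrArg aeval (funext fun k => ?_)
  fin_cases k <;> simp [zpow_neg]

theorem eps_pow_self {N : ℕ} (hN : N ≠ 0) : eps N ^ N = -1 := by
  rw [eps, ← Complex.exp_nat_mul, mul_div_cancel₀ _ (Nat.cast_ne_zero.2 hN), Complex.exp_pi_mul_I]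

theorem eps_pow_pow_sub_mul_add {N : ℕ} (hN : N ≠ 0) (j M i s : ℕ) (hs : s ≤ M) :
    (eps N ^ j) ^ ((M - s) * N + i) = (eps N ^ j) ^ (M * N + i) * ((-1) ^ j) ^ s := by
  have hτ : (eps N ^ j) ^ N = (-1) ^ j := by rw [← pow_mul, mul_comm, pow_mul, eps_pow_self hN]
  have hsq : ((-1 : ℂ) ^ j) ^ s * ((-1) ^ j) ^ s = 1 := by
    rw [← mul_pow, ← mul_pow, neg_one_mul, neg_neg, one_pow, one_pow]
  conv_rhs => rw [← Nat.sub_add_cancel hs]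
  rw [pow_add, pow_add, pow_mul', pow_mul', hτ, pow_add]
  linear_combination -(((-1) ^ j) ^ (M - s) * (eps N ^ j) ^ i) * hsq

theorem dvd_dihRefl_sub_iff {N : ℕ} (hN : N ≠ 0) (M i : ℕ) (a : ℕ → ℂ) (j k : ℕ) :
    (zP - C (eps N ^ j) * wP) ^ k ∣
        dihRefl N j (∑ s ∈ range (M + 1), C (a s) * zP ^ ((M - s) * N + i) * wP ^ (N * s)) -
          ∑ s ∈ range (M + 1), C (a s) * zP ^ ((M - s) * N + i) * wP ^ (N * s) ↔
      ∀ r < k, ∑ s ∈ range (M + 1),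
        ((-1) ^ j) ^ s * a s * ((N * s).choose r - ((M - s) * N + i).choose r : ℂ) = 0 := by
  have hc : eps N ^ j ≠ 0 := pow_ne_zero _ (Complex.exp_ne_zero _)
  rw [dihRefl_eq_reflection]
  refine (X_sub_C_mul_X_pow_dvd_reflection_sub_iff hc _ a _ _ (M * N + i) (fun s hs => ?_) k).trans
    (forall₂_congr fun r _ => ?_)
  · rw [mul_comm N s, add_right_comm, ← add_mul, Nat.sub_add_cancel (by simp at hs; omega)]
  · have hfactor : ∑ s ∈ range (M + 1), a s * (eps N ^ j) ^ ((M - s) * N + i) *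
          ((N * s).choose r - ((M - s) * N + i).choose r : ℂ) =
        (eps N ^ j) ^ (M * N + i) * ∑ s ∈ range (M + 1),
          ((-1) ^ j) ^ s * a s * ((N * s).choose r - ((M - s) * N + i).choose r : ℂ) := by
      rw [mul_sum]
      refine sum_congr rfl fun s hs => ?_
      rw [eps_pow_pow_sub_mul_add hN j M i s (by simp at hs; omega)]
      ring
    rw [hfactor, mul_eq_zero_iff_left (pow_ne_zero _ hc)]

theorem isQuasiInv_iff_of_dvd_iff {N : ℕ} (hN : 1 ≤ N) (m n : ℕ) {p : R2} {P : ℂ → ℕ → Prop}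
    (h : ∀ j k, (zP - C (eps N ^ j) * wP) ^ k ∣ dihRefl N j p - p ↔ P ((-1) ^ j) k) :
    IsQuasiInv N m n p ↔ P 1 (2 * m + 1) ∧ P (-1) (2 * n + 1) := by
  simp only [IsQuasiInv, mult, h]
  constructor
  · intro H
    exact ⟨by simpa using H 0 (by omega), by simpa using H 1 (by omega)⟩
  · rintro ⟨he, ho⟩ j -
    rcases Nat.even_or_odd j with hj | hj
    · simpa [hj, hj.neg_one_pow] using he
    · simpa [Nat.not_even_iff_odd.2 hj, hj.neg_one_pow] using ho

theorem forall_triangular_odd_sum_eq_zero_iff {K : Type*} [Field K] [NeZero (2 : K)]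
    {P : ℕ → K} {γ : ℕ → ℕ → K} (hγ : ∀ r, Odd r → γ r r ≠ 0) (M : ℕ) :
    (∀ r < 2 * M + 1, ∑ d ∈ range (r + 1), ((-1) ^ d - 1) * γ r d * P d = 0) ↔
      ∀ k < M, P (2 * k + 1) = 0 := by
  have hterm : ∀ L r, (∀ k < L, P (2 * k + 1) = 0) → ∀ d ∈ range (2 * L + 1),
      ((-1 : K) ^ d - 1) * γ r d * P d = 0 := by
    intro L r hP d hd
    rcases Nat.even_or_odd d with hd' | ⟨k, rfl⟩
    · simp [hd'.neg_one_pow]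
    · simp [hP k (by simp at hd; omega)]
  constructor
  · intro h k
    induction k using Nat.strong_induction_on with
    | _ k ih =>
      intro hk
      have hsum := h (2 * k + 1) (by omega)
      rw [sum_range_succ, sum_eq_zero (hterm k _ fun k' hk' => ih k' hk' (hk'.trans hk)),
        zero_add, (odd_two_mul_add_one k).neg_one_pow] at hsum
      have hneg : (-1 - 1 : K) ≠ 0 := by
        rw [show (-1 - 1 : K) = -2 by ring]
        exact neg_ne_zero.2 two_ne_zero
      exact (mul_eq_zero.1 hsum).resolve_left (mul_ne_zero hneg (hγ _ (odd_two_mul_add_one k)))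
  · intro h r hr
    exact sum_eq_zero fun d hd => hterm M r h d (range_subset_range.2 (by omega) hd)

namespace Polynomial

variable {K : Type*} [Field K]

/-- At `x = v - u` with `u + v = D` this evaluates to `v.descFactorial r`, at `-x` to
`u.descFactorial r`. -/
def descPochhammerMidpoint (D : K) (r : ℕ) : K[X] :=
  (descPochhammer K r).comp (C 2⁻¹ * X + C (D / 2))

theorem eval_descPochhammerMidpoint (D x : K) (r : ℕ) :
    (descPochhammerMidpoint D r).eval x = (descPochhammer K r).eval ((D + x) / 2) := by
  simp only [descPochhammerMidpoint, eval_comp, eval_add, eval_mul, eval_C, eval_X]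
  congr 1
  ring

theorem natDegree_descPochhammerMidpoint_le (D : K) (r : ℕ) :
    (descPochhammerMidpoint D r).natDegree ≤ r :=
  natDegree_comp_le.trans <| by
    rw [descPochhammer_natDegree]
    exact (Nat.mul_le_mul_left r natDegree_linear_le).trans_eq (mul_one r)

theorem coeff_descPochhammerMidpoint_self [NeZero (2 : K)] (D : K) (r : ℕ) :
    (descPochhammerMidpoint D r).coeff r = 2⁻¹ ^ r := by
  have hlin : (C (2⁻¹ : K) * X + C (D / 2)).natDegree = 1 :=
    natDegree_linear (inv_ne_zero two_ne_zero)
  have := coeff_comp_degree_mul_degree (p := descPochhammer K r) (hlin ▸ one_ne_zero)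
  rwa [hlin, mul_one, descPochhammer_natDegree, (monic_descPochhammer K r).leadingCoeff,
    leadingCoeff_linear (inv_ne_zero two_ne_zero), one_mul] at this

end Polynomial

open Polynomial Nat in
theorem factorial_mul_sum_choose_sub_eq {K : Type*} [Field K] [CharZero K] {ι : Type*}
    (S : Finset ι) (b : ι → K) (u v : ι → ℕ) (D : ℕ) (huv : ∀ s ∈ S, u s + v s = D) (r : ℕ) :
    (r ! : K) * ∑ s ∈ S, b s * ((u s).choose r - (v s).choose r) =
      ∑ d ∈ range (r + 1), ((-1) ^ d - 1) * (descPochhammerMidpoint (D : K) r).coeff d *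
        ∑ s ∈ S, b s * ((v s : K) - u s) ^ d := by
  have hdeg := (natDegree_descPochhammerMidpoint_le (D : K) r).trans_lt r.lt_succ_self
  have hcast : ∀ n : ℕ, (r ! : K) * n.choose r = (descPochhammer K r).eval (n : K) := by
    intro n
    rw [descPochhammer_eval_eq_descFactorial, descFactorial_eq_factorial_mul_choose, cast_mul]
  have hterm : ∀ s ∈ S, (r ! : K) * ((u s).choose r - (v s).choose r) =
      ∑ d ∈ range (r + 1), ((-1) ^ d - 1) * (descPochhammerMidpoint (D : K) r).coeff d *
        ((v s : K) - u s) ^ d := by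
    intro s hs
    have hD : (D : K) = u s + v s := by rw [← huv s hs, cast_add]
    have hu : (descPochhammer K r).eval (u s : K) =
        (descPochhammerMidpoint (D : K) r).eval (-((v s : K) - u s)) := by
      rw [eval_descPochhammerMidpoint, hD]; ring_nf
    have hv : (descPochhammer K r).eval (v s : K) =
        (descPochhammerMidpoint (D : K) r).eval ((v s : K) - u s) := by
      rw [eval_descPochhammerMidpoint, hD]; ring_nf
    rw [mul_sub, hcast, hcast, hu, hv, eval_eq_sum_range' hdeg, eval_eq_sum_range' hdeg,
      ← sum_sub_distrib]
    refine sum_congr rfl fun d _ => ?_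
    rw [neg_pow]
    ring
  rw [mul_sum, sum_congr rfl fun s hs => by rw [mul_left_comm, hterm s hs]]
  simp only [mul_sum]
  rw [sum_comm]
  exact sum_congr rfl fun d _ => sum_congr rfl fun s _ => by ring

theorem forall_sum_mul_choose_sub_eq_zero_iff {K : Type*} [Field K] [CharZero K] {ι : Type*}
    (S : Finset ι) (b : ι → K) (u v : ι → ℕ) (D : ℕ) (huv : ∀ s ∈ S, u s + v s = D) (M : ℕ) :
    (∀ r < 2 * M + 1, ∑ s ∈ S, b s * ((u s).choose r - (v s).choose r : K) = 0) ↔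
      ∀ k < M, ∑ s ∈ S, b s * ((v s : K) - u s) ^ (2 * k + 1) = 0 := by
  rw [← forall_triangular_odd_sum_eq_zero_iff (P := fun d => ∑ s ∈ S, b s * ((v s : K) - u s) ^ d)
    (γ := fun r d => (Polynomial.descPochhammerMidpoint (D : K) r).coeff d) _ M]
  · refine forall₂_congr fun r _ => ?_
    rw [← factorial_mul_sum_choose_sub_eq S b u v D huv r, mul_eq_zero,
      or_iff_right (Nat.cast_ne_zero.2 r.factorial_ne_zero)]
  · intro r _
    rw [Polynomial.coeff_descPochhammerMidpoint_self]
    exact pow_ne_zero _ (inv_ne_zero two_ne_zero)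

theorem sum_eq_zero_and_alternating_sum_eq_zero_iff {K : Type*} [Field K] [NeZero (2 : K)]
    (S : Finset ℕ) (f : ℕ → K) :
    (∑ s ∈ S, f s = 0 ∧ ∑ s ∈ S, (-1) ^ s * f s = 0) ↔
      ∑ s ∈ S.filter (fun s => Even s), f s = 0 ∧ ∑ s ∈ S.filter (fun s => ¬ Even s), f s = 0 := by
  have hEven : ∑ s ∈ S.filter (fun s => Even s), (-1) ^ s * f s =
      ∑ s ∈ S.filter (fun s => Even s), f s :=
    sum_congr rfl fun s hs => by rw [(mem_filter.1 hs).2.neg_one_pow, one_mul]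
  have hOdd : ∑ s ∈ S.filter (fun s => ¬ Even s), (-1) ^ s * f s =
      -∑ s ∈ S.filter (fun s => ¬ Even s), f s := by
    rw [← sum_neg_distrib]
    exact sum_congr rfl fun s hs => by
      rw [(Nat.not_even_iff_odd.1 (mem_filter.1 hs).2).neg_one_pow, neg_one_mul]
  rw [← sum_filter_add_sum_filter_not S (fun s => Even s) f,
    ← sum_filter_add_sum_filter_not S (fun s => Even s) (fun s => (-1) ^ s * f s), hEven, hOdd]
  constructor
  · rintro ⟨hadd, hsub⟩
    have h2 : (2 : K) * ∑ s ∈ S.filter (fun s => Even s), f s = 0 := by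
      linear_combination hadd + hsub
    have hE := (mul_eq_zero.1 h2).resolve_left two_ne_zero
    exact ⟨hE, by linear_combination hadd - hE⟩
  · rintro ⟨hE, hO⟩
    rw [hE, hO, neg_zero, add_zero]
    exact ⟨rfl, rfl⟩

theorem odd_power_sums_parity_iff {K : Type*} [Field K] [NeZero (2 : K)] {S : Finset ℕ}
    {a μ : ℕ → K} {m n : ℕ} (hnm : n ≤ m) :
    ((∀ k < m, ∑ s ∈ S, a s * μ s ^ (2 * k + 1) = 0) ∧
        ∀ k < n, ∑ s ∈ S, (-1) ^ s * a s * μ s ^ (2 * k + 1) = 0) ↔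
      (∀ t, 1 ≤ t → t ≤ n → ∑ s ∈ S.filter (fun s => Even s), a s * μ s ^ (2 * t - 1) = 0) ∧
      (∀ t, 1 ≤ t → t ≤ n → ∑ s ∈ S.filter (fun s => ¬ Even s), a s * μ s ^ (2 * t - 1) = 0) ∧
      (∀ t, n < t → t ≤ m → ∑ s ∈ S, a s * μ s ^ (2 * t - 1) = 0) := by
  have hsplit := fun e => sum_eq_zero_and_alternating_sum_eq_zero_iff S (fun s => a s * μ s ^ e)
  simp only [← mul_assoc] at hsplit
  have hodd : ∀ t, 1 ≤ t → 2 * t - 1 = 2 * (t - 1) + 1 := by omega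
  constructor
  · rintro ⟨hA, hB⟩
    have hEO := fun t (h1 : 1 ≤ t) (hn : t ≤ n) => (hsplit (2 * t - 1)).1
      (hodd t h1 ▸ ⟨hA (t - 1) (by omega), hB (t - 1) (by omega)⟩)
    exact ⟨fun t h1 hn => (hEO t h1 hn).1, fun t h1 hn => (hEO t h1 hn).2,
      fun t hn hm => hodd t (by omega) ▸ hA (t - 1) (by omega)⟩
  · rintro ⟨hE, hO, hA⟩
    have hshift : ∀ k, 2 * (k + 1) - 1 = 2 * k + 1 := fun k => by omega
    have hAB := fun k (hk : k < n) => (hsplit (2 * k + 1)).2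
      ⟨hshift k ▸ hE (k + 1) (by omega) hk, hshift k ▸ hO (k + 1) (by omega) hk⟩
    refine ⟨fun k hk => ?_, fun k hk => (hAB k hk).2⟩
    rcases lt_or_ge k n with hkn | hkn
    · exact (hAB k hkn).1
    · exact hshift k ▸ hA (k + 1) (by omega) (by omega)

theorem quasiInvariance_conditions_reduced_general (N m n i : ℕ) (hN : 1 ≤ N) (hnm : n ≤ m)
    (a : ℕ → ℂ) :
    IsQuasiInv N m n
        (∑ s ∈ Finset.range (m + n + 1),
          C (a s) * zP ^ ((m + n - s) * N + i) * wP ^ (N * s)) ↔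
      (∀ t, 1 ≤ t → t ≤ n →
          ∑ s ∈ (Finset.range (m + n + 1)).filter (fun s => Even s),
            a s * ((((m : ℂ) + n) - 2 * s) * N + i) ^ (2 * t - 1) = 0) ∧
      (∀ t, 1 ≤ t → t ≤ n →
          ∑ s ∈ (Finset.range (m + n + 1)).filter (fun s => ¬ Even s),
            a s * ((((m : ℂ) + n) - 2 * s) * N + i) ^ (2 * t - 1) = 0) ∧
      (∀ t, n < t → t ≤ m →
          ∑ s ∈ Finset.range (m + n + 1),
            a s * ((((m : ℂ) + n) - 2 * s) * N + i) ^ (2 * t - 1) = 0) := by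
  have hdeg : ∀ s ∈ range (m + n + 1), N * s + ((m + n - s) * N + i) = (m + n) * N + i := by
    intro s hs
    rw [← add_assoc, mul_comm N s, ← add_mul, Nat.add_sub_cancel' (by simp at hs; omega)]
  have hμ : ∀ s ∈ range (m + n + 1),
      (((m + n - s) * N + i : ℕ) : ℂ) - (N * s : ℕ) = (((m : ℂ) + n) - 2 * s) * N + i := by
    intro s hs
    push_cast [Nat.cast_sub (show s ≤ m + n by simp at hs; omega)]
    ring
  let P : ℂ → ℕ → Prop := fun τ k => ∀ r < k, ∑ s ∈ range (m + n + 1),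
    τ ^ s * a s * ((N * s).choose r - ((m + n - s) * N + i).choose r : ℂ) = 0
  have hchoose : ∀ (τ : ℂ) (M : ℕ), P τ (2 * M + 1) ↔ ∀ k < M, ∑ s ∈ range (m + n + 1),
      τ ^ s * a s * ((((m : ℂ) + n) - 2 * s) * N + i) ^ (2 * k + 1) = 0 := fun τ M =>
    (forall_sum_mul_choose_sub_eq_zero_iff _ (fun s => τ ^ s * a s) _ _ _ hdeg M).trans
      (forall₂_congr fun k _ => by rw [sum_congr rfl fun s hs => by rw [hμ s hs]])
  rw [isQuasiInv_iff_of_dvd_iff hN m n (P := P)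
    (dvd_dihRefl_sub_iff (by omega : N ≠ 0) (m + n) i a), hchoose, hchoose]
  simpa only [one_pow, one_mul] using odd_power_sums_parity_iff hnm

theorem quasiInvariance_conditions_reduced (N m n i : ℕ) (hN : 1 ≤ N) (hnm : n ≤ m)
    (hi1 : 1 ≤ i) (hi2 : i ≤ 2 * N - 1) (hiN : i ≠ N) (a : ℕ → ℂ) :
    IsQuasiInv N m n
        (∑ s ∈ Finset.range (m + n + 1),
          C (a s) * zP ^ ((m + n - s) * N + i) * wP ^ (N * s)) ↔
      (∀ t, 1 ≤ t → t ≤ n →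
          ∑ s ∈ (Finset.range (m + n + 1)).filter (fun s => Even s),
            a s * ((((m : ℂ) + n) - 2 * s) * N + i) ^ (2 * t - 1) = 0) ∧
      (∀ t, 1 ≤ t → t ≤ n →
          ∑ s ∈ (Finset.range (m + n + 1)).filter (fun s => ¬ Even s),
            a s * ((((m : ℂ) + n) - 2 * s) * N + i) ^ (2 * t - 1) = 0) ∧
      (∀ t, n < t → t ≤ m →
          ∑ s ∈ Finset.range (m + n + 1),
            a s * ((((m : ℂ) + n) - 2 * s) * N + i) ^ (2 * t - 1) = 0) :=
  quasiInvariance_conditions_reduced_general N m n i hN hnm a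
end
end

section
/- Assume m > n. None of the four quasi-invariants q⁰ = 1, q¹ = (z^N+w^N)^{2n+1}, q² = (z^N−w^N)^{2m+1}, q³ = q¹·q² belongs to the ideal I of the ring Q of quasi-invariants generated by the two elements z·w and z^{2N}+w^{2N}. -/
open MvPolynomial Finset

noncomputable section

/-- Membership in the ideal `I` of the ring `Q` of quasi-invariants generated by
`z·w` and `z^{2N}+w^{2N}`: an element of `Q` lies in `I` iff it can be written as
`u·(z·w) + v·(z^{2N}+w^{2N})` with `u, v ∈ Q`. -/
def MemIdealI (N m n : ℕ) (p : R2) : Prop :=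
  ∃ u v : R2, IsQuasiInv N m n u ∧ IsQuasiInv N m n v ∧
    p = u * (zP * wP) + v * (zP ^ (2 * N) + wP ^ (2 * N))


/-!
Only the coefficients of the pure powers `z^D`, `w^D` are needed. The element `z w` vanishes on
both axes, so if `p = u z w + v (z^{2N} + w^{2N})`, these coefficients of `p` vanish for `D < 2N`
and equal those of `v` in degree `D - 2N` otherwise.

For a quasi-invariant `v` let `c_a` be its coefficient of `z^a w^{t-a}`, where `t = N T`.
Evaluating `σⱼ v - v` at `(εʲ x W, W)` and taking the coefficient of `W^t` shows that
`(x - 1)^{2mⱼ+1}` divides `∑ₐ c_a εʲᵃ (x^{t-a} - x^a)`. Averaging over the `N` mirrors of one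
orbit keeps only the terms with `a = N b`, and the substitution `x ↦ x^N` can then be undone:
`(x - 1)^{2m+1}` divides `F = ∑_b c_{Nb} (x^{T-b} - x^b)` and `(x - 1)^{2n+1}` divides
`G = ∑_b (-1)^b c_{Nb} (x^{T-b} - x^b)`. Both have degree `≤ T`, with `x^T`-coefficients
`c_0 - c_{NT}` and `c_0 - (-1)^T c_{NT}`; for even `T`, `G(x) = F(-x)`, so
`(x - 1)^{2m+1} (x + 1)^{2n+1}` divides `F`. Hence `c_{NT} = c_0` if `T ≤ 2m` or if `T ≤ 2m + 2n`
is even, and `c_{NT} = 0` if `T ≤ 2n` is odd, whereas `(z^N + w^N)^k (z^N - w^N)^l` has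
coefficients `1` at `z^{N(k+l)}` and `(-1)^l` at `w^{N(k+l)}`.
-/

theorem IsPrimitiveRoot.geom_sum_pow_eq_ite {K : Type*} [Field K] {ω : K} {N : ℕ}
    (hω : IsPrimitiveRoot ω N) (a : ℕ) :
    ∑ i ∈ range N, (ω ^ a) ^ i = if N ∣ a then (N : K) else 0 := by
  split_ifs with ha
  · simp [(hω.pow_eq_one_iff_dvd a).2 ha]
  · rw [geom_sum_eq (mt (hω.pow_eq_one_iff_dvd a).1 ha), ← pow_mul, mul_comm, pow_mul,
      hω.pow_eq_one, one_pow, sub_self, zero_div]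

theorem Finsupp.eq_single_zero_add_single_one_iff {M : Type*} [AddZeroClass M]
    (d : Fin 2 →₀ M) (a b : M) :
    d = single 0 a + single 1 b ↔ d 0 = a ∧ d 1 = b := by
  constructor
  · rintro rfl
    simp
  · rintro ⟨rfl, rfl⟩
    ext k
    fin_cases k <;> simp

namespace Polynomial

variable {K : Type*} [Field K]

def skewPoly (g : ℕ → K) (t : ℕ) : K[X] :=
  ∑ a ∈ range (t + 1), C (g a) * (X ^ (t - a) - X ^ a)

theorem skewPoly_sum {ι : Type*} (s : Finset ι) (g : ι → ℕ → K) (t : ℕ) :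
    skewPoly (fun a => ∑ i ∈ s, g i a) t = ∑ i ∈ s, skewPoly (g i) t := by
  simp only [skewPoly, map_sum, Finset.sum_mul]
  exact Finset.sum_comm

theorem C_mul_skewPoly (r : K) (g : ℕ → K) (t : ℕ) :
    C r * skewPoly g t = skewPoly (fun a => r * g a) t := by
  simp only [skewPoly, Finset.mul_sum, map_mul, mul_assoc]

theorem natDegree_skewPoly_le (g : ℕ → K) (t : ℕ) : (skewPoly g t).natDegree ≤ t := by
  refine natDegree_sum_le_of_forall_le _ _ fun a ha => (natDegree_C_mul_le _ _).trans ?_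
  refine (natDegree_sub_le _ _).trans ?_
  simp only [natDegree_X_pow, max_le_iff]
  exact ⟨Nat.sub_le t a, Nat.lt_succ_iff.1 (Finset.mem_range.1 ha)⟩

theorem coeff_skewPoly_self (g : ℕ → K) (t : ℕ) : (skewPoly g t).coeff t = g 0 - g t := by
  rcases Nat.eq_zero_or_pos t with rfl | ht
  · simp [skewPoly]
  simp only [skewPoly, finsetSum_coeff, mul_sub, coeff_sub, coeff_C_mul_X_pow,
    Finset.sum_sub_distrib]
  rw [Finset.sum_eq_single 0, Finset.sum_eq_single t] <;> simp <;> omega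

theorem eq_of_dvd_skewPoly {q : K[X]} {g : ℕ → K} {t : ℕ} (h : q ∣ skewPoly g t)
    (ht : t < q.natDegree) : g 0 = g t := by
  have hzero := eq_zero_of_dvd_of_natDegree_lt h ((natDegree_skewPoly_le g t).trans_lt ht)
  have htop := coeff_skewPoly_self g t
  rw [hzero, coeff_zero] at htop
  exact sub_eq_zero.1 htop.symm

theorem skewPoly_comp_neg_X (g : ℕ → K) {t : ℕ} (ht : Even t) :
    (skewPoly g t).comp (-X) = skewPoly (fun a => (-1) ^ a * g a) t := by
  simp only [skewPoly, sum_comp, mul_comp, C_comp, sub_comp, pow_comp, X_comp,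
    neg_pow (X : K[X])]
  refine Finset.sum_congr rfl fun a ha => ?_
  have hpar : (t - a) % 2 = a % 2 := by
    have := Finset.mem_range.1 ha
    have := Nat.even_iff.1 ht
    omega
  rw [neg_one_pow_eq_pow_mod_two (t - a), hpar, ← neg_one_pow_eq_pow_mod_two, map_mul, map_pow,
    map_neg, C_1]
  ring

theorem skewPoly_comp_X_pow (h : ℕ → K) {N : ℕ} (hN : N ≠ 0) (T : ℕ) :
    (skewPoly (fun b => h (N * b)) T).comp (X ^ N) =
      skewPoly (fun a => if N ∣ a then h a else 0) (N * T) := by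
  have himage : (range (T + 1)).image (N * ·) = (range (N * T + 1)).filter (N ∣ ·) := by
    ext a
    simp only [Finset.mem_image, Finset.mem_filter, Finset.mem_range]
    constructor
    · rintro ⟨b, hb, rfl⟩
      exact ⟨Nat.lt_succ_of_le (Nat.mul_le_mul_left N (Nat.lt_succ_iff.1 hb)), dvd_mul_right _ _⟩
    · rintro ⟨ha, b, rfl⟩
      exact ⟨b, Nat.lt_succ_of_le (Nat.le_of_mul_le_mul_left (Nat.lt_succ_iff.1 ha)
        (Nat.pos_of_ne_zero hN)), rfl⟩
  simp only [skewPoly, apply_ite C, C_0, ite_mul, zero_mul]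
  rw [← Finset.sum_filter, ← himage, Finset.sum_image fun _ _ _ _ h => Nat.eq_of_mul_eq_mul_left
    (Nat.pos_of_ne_zero hN) h, sum_comp]
  refine Finset.sum_congr rfl fun b _ => ?_
  simp only [mul_comp, C_comp, sub_comp, pow_comp, X_comp, ← pow_mul, Nat.mul_sub]

theorem X_sub_one_pow_dvd_of_dvd_comp_X_pow {P : K[X]} {N M : ℕ} (hN : (N : K) ≠ 0)
    (h : (X - 1) ^ M ∣ P.comp (X ^ N)) : (X - 1) ^ M ∣ P := by
  rcases eq_or_ne P 0 with rfl | hP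
  · exact dvd_zero _
  obtain ⟨q, hPq, hq⟩ := P.exists_eq_pow_rootMultiplicity_mul_and_not_dvd hP 1
  set r := P.rootMultiplicity 1
  rw [C_1] at hPq hq
  have hcomp : P.comp (X ^ N) = (X - 1) ^ r * ((∑ i ∈ range N, X ^ i) ^ r * q.comp (X ^ N)) := by
    rw [hPq, mul_comp, pow_comp, sub_comp, X_comp, one_comp, ← geom_sum_mul, mul_pow]
    ring
  -- `X ^ N - 1 = (X - 1) (1 + X + ⋯ + X ^ (N - 1))`, and the second factor is `N ≠ 0` at `1`
  have hcofactor : ¬ (X - 1) ∣ (∑ i ∈ range N, X ^ i) ^ r * q.comp (X ^ N) := by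
    rw [← C_1, dvd_iff_isRoot] at hq ⊢
    simpa [IsRoot, eval_finsetSum, hN] using hq
  have hMr : M ≤ r := by
    by_contra! hrM
    refine hcofactor ((mul_dvd_mul_iff_left (pow_ne_zero r (X_sub_C_ne_zero 1))).1 ?_)
    rw [C_1, ← pow_succ, ← hcomp]
    exact (pow_dvd_pow _ hrM).trans h
  exact (pow_dvd_pow _ hMr).trans ⟨q, hPq⟩

theorem sum_skewPoly_primitiveRoot {ζ : K} {N : ℕ} (hζ : IsPrimitiveRoot ζ (2 * N)) (hN : N ≠ 0)
    (c : ℕ → K) (par T : ℕ) :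
    ∑ i ∈ range N, skewPoly (fun a => c a * (ζ ^ (2 * i + par)) ^ a) (N * T) =
      C (N : K) * (skewPoly (fun b => (-1) ^ (par * b) * c (N * b)) T).comp (X ^ N) := by
  have hζ2 : IsPrimitiveRoot (ζ ^ 2) N := hζ.pow (by omega) rfl
  have hζN : ζ ^ N = -1 := (hζ.pow (by omega) (mul_comm 2 N)).eq_neg_one_of_two_right
  have hsum : ∀ a, ∑ i ∈ range N, c a * (ζ ^ (2 * i + par)) ^ a =
      if N ∣ a then N * (ζ ^ (par * a) * c a) else 0 := by
    intro a
    have : ∀ i, c a * (ζ ^ (2 * i + par)) ^ a = c a * ζ ^ (par * a) * ((ζ ^ 2) ^ a) ^ i := by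
      intro i; ring
    simp only [this, ← Finset.mul_sum, hζ2.geom_sum_pow_eq_ite]
    split_ifs <;> ring
  simp only [← skewPoly_sum, hsum]
  rw [← skewPoly_comp_X_pow (fun a => (N : K) * (ζ ^ (par * a) * c a)) hN,
    ← C_comp (a := (N : K)), ← mul_comp, C_mul_skewPoly]
  congr 2
  funext b
  rw [mul_left_comm par, pow_mul, hζN]

theorem natDegree_X_sub_one_pow (k : ℕ) : ((X - 1 : K[X]) ^ k).natDegree = k := by
  rw [← C_1, natDegree_pow, natDegree_X_sub_C, mul_one]

theorem eq_of_X_sub_one_pow_dvd_skewPoly_of_even [NeZero (2 : K)] {g : ℕ → K} {t a b : ℕ}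
    (ht : Even t) (hlt : t < a + b) (ha : (X - 1) ^ a ∣ skewPoly g t)
    (hb : (X - 1) ^ b ∣ skewPoly (fun i => (-1) ^ i * g i) t) : g 0 = g t := by
  have hb' : (X + 1) ^ b ∣ skewPoly g t := by
    rw [← skewPoly_comp_neg_X _ ht, dvd_comp_neg_X_iff, pow_comp, sub_comp, X_comp, one_comp,
      show (-X - 1 : K[X]) = -(X + 1) by ring, neg_pow] at hb
    exact (dvd_mul_left _ _).trans hb
  have hcop : IsCoprime ((X - 1 : K[X]) ^ a) ((X + 1) ^ b) := by
    refine IsCoprime.pow ?_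
    simpa using isCoprime_X_sub_C_of_isUnit_sub (R := K) (a := 1) (b := -1)
      (by norm_num [NeZero.ne (2 : K)])
  refine eq_of_dvd_skewPoly (hcop.mul_dvd ha hb') ?_
  rwa [natDegree_mul (pow_ne_zero _ (by simpa using X_sub_C_ne_zero (1 : K)))
    (pow_ne_zero _ (by simpa using X_add_C_ne_zero (1 : K))), natDegree_X_sub_one_pow, ← C_1,
    natDegree_pow_X_add_C]

end Polynomial

namespace MvPolynomial

theorem coeff_aeval_piSingle_X {σ R : Type*} [CommSemiring R] [DecidableEq σ]
    (i : σ) (p : MvPolynomial σ R) (D : ℕ) :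
    (aeval (Pi.single i Polynomial.X) p).coeff D = coeff (Finsupp.single i D) p := by
  induction p using induction_on' with
  | add p q hp hq => simp [hp, hq]
  | monomial d r =>
    rw [aeval_monomial, coeff_monomial]
    by_cases hd : d = Finsupp.single i (d i)
    · rw [hd, Finsupp.prod_single_index (by simp)]
      simp [Polynomial.coeff_X_pow, (Finsupp.single_injective i).eq_iff, eq_comm]
    · obtain ⟨k, hki, hk⟩ : ∃ k, k ≠ i ∧ d k ≠ 0 := by
        by_contra! h
        exact hd (Finsupp.ext fun k => by
          by_cases hki : k = i <;> simp [hki, h])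
      rw [Finsupp.prod, Finset.prod_eq_zero (i := k) (by simpa using hk)
        (by simp [hki, hk]), mul_zero, Polynomial.coeff_zero, if_neg]
      rintro rfl
      simp [hki] at hk

section FinTwo

variable {R S : Type*} [CommSemiring R] [CommSemiring S] [Algebra R S]

def homCoeff (p : MvPolynomial (Fin 2) R) (t a : ℕ) : R :=
  coeff (Finsupp.single 0 a + Finsupp.single 1 (t - a)) p

theorem homCoeff_zero (p : MvPolynomial (Fin 2) R) (t : ℕ) :
    p.homCoeff t 0 = coeff (Finsupp.single 1 t) p := by
  simp [homCoeff]

theorem homCoeff_self (p : MvPolynomial (Fin 2) R) (t : ℕ) :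
    p.homCoeff t t = coeff (Finsupp.single 0 t) p := by
  simp [homCoeff]

theorem coeff_aeval_C_mul_X (u : Fin 2 → S) (p : MvPolynomial (Fin 2) R) (t : ℕ) :
    (aeval (fun k => Polynomial.C (u k) * Polynomial.X) p).coeff t =
      ∑ a ∈ range (t + 1), algebraMap R S (p.homCoeff t a) * u 0 ^ a * u 1 ^ (t - a) := by
  induction p using induction_on' with
  | add p q hp hq =>
    simp only [map_add, Polynomial.coeff_add, hp, hq, homCoeff, coeff_add, ← sum_add_distrib,
      add_mul]
  | monomial d r =>
    have hmon : aeval (fun k => Polynomial.C (u k) * Polynomial.X) (monomial d r) =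
        Polynomial.C (algebraMap R S r * u 0 ^ d 0 * u 1 ^ d 1) * Polynomial.X ^ (d 0 + d 1) := by
      rw [aeval_monomial, Finsupp.prod_fintype _ _ fun _ => pow_zero _, Fin.prod_univ_two]
      simp only [mul_pow, pow_add, map_mul, map_pow, Polynomial.algebraMap_apply]
      ring
    rw [hmon, Polynomial.coeff_C_mul_X_pow]
    simp only [homCoeff, coeff_monomial, Finsupp.eq_single_zero_add_single_one_iff]
    split_ifs with ht
    · rw [Finset.sum_eq_single (d 0), if_pos ⟨rfl, by omega⟩, ht, Nat.add_sub_cancel_left]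
      · intro a _ ha
        rw [if_neg fun h => ha h.1.symm, map_zero, zero_mul, zero_mul]
      · exact fun h => absurd (Finset.mem_range.2 (by omega)) h
    · refine (Finset.sum_eq_zero fun a ha => ?_).symm
      have := Finset.mem_range.1 ha
      rw [if_neg (by omega), map_zero, zero_mul, zero_mul]

end FinTwo

section Field

variable {K : Type*} [Field K]

theorem X_sub_one_pow_dvd_skewPoly_homCoeff {ζ : K} (hζ : ζ ≠ 0)
    {σ : MvPolynomial (Fin 2) K →ₐ[K] MvPolynomial (Fin 2) K}
    (hσ₀ : σ (X 0) = C ζ * X 1) (hσ₁ : σ (X 1) = C ζ⁻¹ * X 0) {M : ℕ}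
    {p : MvPolynomial (Fin 2) K} (h : (X 0 - C ζ * X 1) ^ M ∣ σ p - p) (t : ℕ) :
    (Polynomial.X - 1) ^ M ∣ Polynomial.skewPoly (fun a => p.homCoeff t a * ζ ^ a) t := by
  -- Evaluate at `(ζ x W, W)` and at its mirror image `(ζ W, x W)`; the degree-`t` part of `p`
  -- is the coefficient of `W ^ t`.
  set θ₀ : MvPolynomial (Fin 2) K →ₐ[K] Polynomial (Polynomial K) :=
    aeval fun k => Polynomial.C (![Polynomial.C ζ * Polynomial.X, 1] k) * Polynomial.X
  set θ₁ : MvPolynomial (Fin 2) K →ₐ[K] Polynomial (Polynomial K) :=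
    aeval fun k => Polynomial.C (![Polynomial.C ζ, Polynomial.X] k) * Polynomial.X
  have hθ : θ₀.comp σ = θ₁ := by
    refine algHom_ext fun k => ?_
    fin_cases k
    · simp [θ₀, θ₁, hσ₀]
    · show θ₀ (σ (X 1)) = θ₁ (X 1)
      simp only [θ₀, θ₁, hσ₁, map_mul, algHom_C, aeval_X, Polynomial.algebraMap_apply,
        Polynomial.algebraMap_eq, Matrix.cons_val_zero, Matrix.cons_val_one,
        Matrix.cons_val_fin_one]
      rw [← mul_assoc, ← mul_assoc, ← map_mul, ← map_mul, ← map_mul, inv_mul_cancel₀ hζ]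
      simp
  have hmirror : θ₀ (X 0 - C ζ * X 1) =
      Polynomial.C (Polynomial.C ζ * (Polynomial.X - 1)) * Polynomial.X := by
    simp only [θ₀, map_sub, map_mul, aeval_X, algHom_C, Polynomial.algebraMap_apply,
      Polynomial.algebraMap_eq, Matrix.cons_val_zero, Matrix.cons_val_one, Matrix.cons_val_fin_one]
    ring
  obtain ⟨g, hg⟩ := h
  have hdiff : θ₁ p - θ₀ p = Polynomial.C ((Polynomial.C ζ * (Polynomial.X - 1)) ^ M) *
      (Polynomial.X ^ M * θ₀ g) := by
    rw [← hθ, AlgHom.comp_apply, ← map_sub, hg, map_mul, map_pow, hmirror, mul_pow,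
      Polynomial.C_pow]
    ring
  have hcoeff := (Polynomial.C_dvd_iff_dvd_coeff _ _).1 ⟨_, hdiff⟩ t
  rw [Polynomial.coeff_sub, coeff_aeval_C_mul_X, coeff_aeval_C_mul_X, ← sum_sub_distrib] at hcoeff
  refine (dvd_mul_left _ (Polynomial.C ζ ^ M)).trans ?_
  rw [← mul_pow]
  convert hcoeff using 1
  refine Finset.sum_congr rfl fun a _ => ?_
  simp only [map_mul, map_pow, Polynomial.algebraMap_eq, Matrix.cons_val_zero, Matrix.cons_val_one,
    Matrix.cons_val_fin_one]
  ring

end Field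

end MvPolynomial

theorem isPrimitiveRoot_eps {N : ℕ} (hN : N ≠ 0) : IsPrimitiveRoot (eps N) (2 * N) := by
  rw [eps]
  convert Complex.isPrimitiveRoot_exp (2 * N) (by omega) using 2
  push_cast
  field_simp

theorem dihRefl_X_zero (N j : ℕ) : dihRefl N j (X 0) = C (eps N ^ j) * X 1 := by
  simp [dihRefl]

theorem dihRefl_X_one (N j : ℕ) : dihRefl N j (X 1) = C (eps N ^ j)⁻¹ * X 0 := by
  simp [dihRefl]

theorem mult_two_mul_add (m n i par : ℕ) : mult m n (2 * i + par) = mult m n par := by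
  simp [mult, Nat.even_add]

section QuasiInvariant

variable {N m n : ℕ} {v : R2}

theorem IsQuasiInv.X_sub_one_pow_dvd_skewPoly {j : ℕ} (hv : IsQuasiInv N m n v) (hj : j < 2 * N)
    (t : ℕ) : (Polynomial.X - 1) ^ (2 * mult m n j + 1) ∣
      Polynomial.skewPoly (fun a => v.homCoeff t a * (eps N ^ j) ^ a) t :=
  X_sub_one_pow_dvd_skewPoly_homCoeff (pow_ne_zero _ (Complex.exp_ne_zero _))
    (dihRefl_X_zero N j) (dihRefl_X_one N j) (hv j hj) t

theorem IsQuasiInv.X_sub_one_pow_dvd_skewPoly_of_lt_two {par : ℕ} (hv : IsQuasiInv N m n v)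
    (hN : N ≠ 0) (hpar : par < 2) (T : ℕ) : (Polynomial.X - 1) ^ (2 * mult m n par + 1) ∣
      Polynomial.skewPoly (fun b => (-1) ^ (par * b) * v.homCoeff (N * T) (N * b)) T := by
  -- average the mirror conditions over the `N` mirrors `j = 2 i + par` of the same orbit
  have hsum : (Polynomial.X - 1) ^ (2 * mult m n par + 1) ∣ ∑ i ∈ range N,
      Polynomial.skewPoly (fun a => v.homCoeff (N * T) a * (eps N ^ (2 * i + par)) ^ a) (N * T) :=
    dvd_sum fun i hi => mult_two_mul_add m n i par ▸
      hv.X_sub_one_pow_dvd_skewPoly (by have := Finset.mem_range.1 hi; omega) _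
  rw [Polynomial.sum_skewPoly_primitiveRoot (isPrimitiveRoot_eps hN) hN,
    (Polynomial.isUnit_C.2 (IsUnit.mk0 _ (Nat.cast_ne_zero.2 hN))).dvd_mul_left] at hsum
  exact Polynomial.X_sub_one_pow_dvd_of_dvd_comp_X_pow (Nat.cast_ne_zero.2 hN) hsum

theorem IsQuasiInv.X_sub_one_pow_dvd_skewPoly_homCoeff (hv : IsQuasiInv N m n v) (hN : N ≠ 0)
    (T : ℕ) :
    (Polynomial.X - 1) ^ (2 * m + 1) ∣
        Polynomial.skewPoly (fun b => v.homCoeff (N * T) (N * b)) T ∧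
      (Polynomial.X - 1) ^ (2 * n + 1) ∣
        Polynomial.skewPoly (fun b => (-1) ^ b * v.homCoeff (N * T) (N * b)) T := by
  constructor
  · simpa [mult] using hv.X_sub_one_pow_dvd_skewPoly_of_lt_two hN (par := 0) (by norm_num) T
  · simpa [mult] using hv.X_sub_one_pow_dvd_skewPoly_of_lt_two hN (par := 1) (by norm_num) T

theorem IsQuasiInv.coeff_single_zero_eq_zero (hv : IsQuasiInv N m n v) (hN : N ≠ 0) {T : ℕ}
    (hT : Odd T) (hTm : T < 2 * m + 1) (hTn : T < 2 * n + 1) :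
    coeff (Finsupp.single 0 (N * T)) v = 0 := by
  obtain ⟨hm, hn⟩ := hv.X_sub_one_pow_dvd_skewPoly_homCoeff hN T
  have h₀ := Polynomial.eq_of_dvd_skewPoly hm (by rwa [Polynomial.natDegree_X_sub_one_pow])
  have h₁ := Polynomial.eq_of_dvd_skewPoly hn (by rwa [Polynomial.natDegree_X_sub_one_pow])
  simp only [mul_zero, homCoeff_zero, homCoeff_self, pow_zero, one_mul, hT.neg_one_pow] at h₀ h₁
  linear_combination (h₁ - h₀) / 2

theorem IsQuasiInv.coeff_single_zero_eq_coeff_single_one_of_lt (hv : IsQuasiInv N m n v)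
    (hN : N ≠ 0) {T : ℕ} (hTm : T < 2 * m + 1) :
    coeff (Finsupp.single 0 (N * T)) v = coeff (Finsupp.single 1 (N * T)) v := by
  have := Polynomial.eq_of_dvd_skewPoly (hv.X_sub_one_pow_dvd_skewPoly_homCoeff hN T).1
    (by rwa [Polynomial.natDegree_X_sub_one_pow])
  simpa [homCoeff_zero, homCoeff_self] using this.symm

theorem IsQuasiInv.coeff_single_zero_eq_coeff_single_one_of_even (hv : IsQuasiInv N m n v)
    (hN : N ≠ 0) {T : ℕ} (hT : Even T) (hTmn : T < 2 * m + 2 * n + 2) :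
    coeff (Finsupp.single 0 (N * T)) v = coeff (Finsupp.single 1 (N * T)) v := by
  obtain ⟨hm, hn⟩ := hv.X_sub_one_pow_dvd_skewPoly_homCoeff hN T
  have := Polynomial.eq_of_X_sub_one_pow_dvd_skewPoly_of_even hT (by omega) hm hn
  simpa [homCoeff_zero, homCoeff_self] using this.symm

end QuasiInvariant

theorem MemIdealI.coeff_single {N m n : ℕ} {p : R2} (hp : MemIdealI N m n p) (hN : N ≠ 0) :
    ∃ v, IsQuasiInv N m n v ∧ ∀ i : Fin 2,
      (∀ D < 2 * N, coeff (Finsupp.single i D) p = 0) ∧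
      ∀ T, coeff (Finsupp.single i (N * (T + 2))) p = coeff (Finsupp.single i (N * T)) v := by
  obtain ⟨u, v, -, hv, rfl⟩ := hp
  refine ⟨v, hv, fun i => ?_⟩
  have hrestrict : aeval (Pi.single i (Polynomial.X : Polynomial ℂ))
      (u * (zP * wP) + v * (zP ^ (2 * N) + wP ^ (2 * N))) =
        aeval (Pi.single i Polynomial.X) v * Polynomial.X ^ (2 * N) := by
    fin_cases i <;> simp [zP, wP, zero_pow (by omega : 2 * N ≠ 0)]
  simp only [← coeff_aeval_piSingle_X, hrestrict]
  refine ⟨fun D hD => by rw [Polynomial.coeff_mul_X_pow', if_neg (by omega)], fun T => ?_⟩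
  rw [show N * (T + 2) = N * T + 2 * N by ring, Polynomial.coeff_mul_X_pow]

theorem coeff_single_pow_mul_pow {N : ℕ} (hN : N ≠ 0) (k l : ℕ) :
    coeff (Finsupp.single 0 (N * (k + l))) ((zP ^ N + wP ^ N) ^ k * (zP ^ N - wP ^ N) ^ l) = 1 ∧
      coeff (Finsupp.single 1 (N * (k + l))) ((zP ^ N + wP ^ N) ^ k * (zP ^ N - wP ^ N) ^ l) =
        (-1) ^ l := by
  have h₀ : aeval (Pi.single 0 (Polynomial.X : Polynomial ℂ))
      ((zP ^ N + wP ^ N) ^ k * (zP ^ N - wP ^ N) ^ l) = Polynomial.X ^ (N * (k + l)) := by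
    simp only [zP, wP, map_mul, map_pow, map_add, map_sub, aeval_X, Pi.single_eq_same,
      Pi.single_eq_of_ne one_ne_zero, zero_pow hN]
    ring
  have h₁ : aeval (Pi.single 1 (Polynomial.X : Polynomial ℂ))
      ((zP ^ N + wP ^ N) ^ k * (zP ^ N - wP ^ N) ^ l) =
        Polynomial.C ((-1) ^ l) * Polynomial.X ^ (N * (k + l)) := by
    simp only [zP, wP, map_mul, map_pow, map_add, map_sub, aeval_X, Pi.single_eq_same,
      Pi.single_eq_of_ne zero_ne_one, zero_pow hN, map_neg, map_one]
    ring
  rw [← coeff_aeval_piSingle_X, ← coeff_aeval_piSingle_X, h₀, h₁, Polynomial.coeff_X_pow_self,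
    Polynomial.coeff_C_mul_X_pow, if_pos rfl]
  exact ⟨rfl, rfl⟩

theorem not_memIdealI_pow_mul_pow {N m n k l : ℕ} (hN : N ≠ 0) (hkl : k + l ≤ 1) :
    ¬ MemIdealI N m n ((zP ^ N + wP ^ N) ^ k * (zP ^ N - wP ^ N) ^ l) := fun h => by
  obtain ⟨v, -, hcoeff⟩ := h.coeff_single hN
  have hlt : N * (k + l) < 2 * N := by nlinarith [Nat.pos_of_ne_zero hN]
  exact one_ne_zero ((coeff_single_pow_mul_pow hN k l).1.symm.trans ((hcoeff 0).1 _ hlt))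

theorem MemIdealI.exists_isQuasiInv_coeff {N m n k l T : ℕ} (hN : N ≠ 0) (hkl : k + l = T + 2)
    (h : MemIdealI N m n ((zP ^ N + wP ^ N) ^ k * (zP ^ N - wP ^ N) ^ l)) :
    ∃ v, IsQuasiInv N m n v ∧ coeff (Finsupp.single 0 (N * T)) v = 1 ∧
      coeff (Finsupp.single 1 (N * T)) v = (-1) ^ l := by
  obtain ⟨v, hv, hcoeff⟩ := h.coeff_single hN
  obtain ⟨h₀, h₁⟩ := coeff_single_pow_mul_pow hN k l
  rw [hkl, (hcoeff 0).2] at h₀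
  rw [hkl, (hcoeff 1).2] at h₁
  exact ⟨v, hv, h₀, h₁⟩

theorem q0_q1_q2_q3_not_mem_ideal (N m n : ℕ) (hN : 1 ≤ N) (hmn : n < m) :
    ¬ MemIdealI N m n 1 ∧
    ¬ MemIdealI N m n ((zP ^ N + wP ^ N) ^ (2 * n + 1)) ∧
    ¬ MemIdealI N m n ((zP ^ N - wP ^ N) ^ (2 * m + 1)) ∧
    ¬ MemIdealI N m n ((zP ^ N + wP ^ N) ^ (2 * n + 1) * (zP ^ N - wP ^ N) ^ (2 * m + 1)) := by
  have hN₀ : N ≠ 0 := by omega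
  refine ⟨?_, fun h => ?_, fun h => ?_, fun h => ?_⟩
  · simpa using not_memIdealI_pow_mul_pow (m := m) (n := n) (k := 0) (l := 0) hN₀ (by norm_num)
  · rcases n with _ | s
    · exact not_memIdealI_pow_mul_pow (k := 1) (l := 0) hN₀ (by norm_num) (by simpa using h)
    obtain ⟨v, hv, hz, -⟩ := MemIdealI.exists_isQuasiInv_coeff hN₀ (k := 2 * (s + 1) + 1)
      (l := 0) (T := 2 * s + 1) (by omega) (by simpa using h)
    exact one_ne_zero (hz.symm.trans
      (hv.coeff_single_zero_eq_zero hN₀ (odd_two_mul_add_one s) (by omega) (by omega)))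
  · obtain ⟨v, hv, hz, hw⟩ := MemIdealI.exists_isQuasiInv_coeff hN₀ (k := 0) (l := 2 * m + 1)
      (T := 2 * m - 1) (by omega) (by simpa using h)
    have := hv.coeff_single_zero_eq_coeff_single_one_of_lt hN₀ (T := 2 * m - 1) (by omega)
    rw [hz, hw, Odd.neg_one_pow ⟨m, rfl⟩] at this
    norm_num at this
  · obtain ⟨v, hv, hz, hw⟩ := MemIdealI.exists_isQuasiInv_coeff hN₀ (T := 2 * m + 2 * n)
      (by omega) h
    have := hv.coeff_single_zero_eq_coeff_single_one_of_even hN₀ (T := 2 * m + 2 * n)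
      ⟨m + n, by ring⟩ (by omega)
    rw [hz, hw, Odd.neg_one_pow ⟨m, rfl⟩] at this
    norm_num at this
end
end
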